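/- arXiv:2508.21427 — 2 statements merged into one kernel-verified Lean document; each statement's English description precedes it below -/
import Mathlib

section
/- For every integer d ≥ 1, every index k ∈ {1,…,d}, and every pair of states (p₋,u₋), (p₊,u₊) with p₋ > 0, p₊ > 0 and u₋, u₊ ∈ ℝ^d, the numerical flux F̃_k satisfies the Tadmor entropy-conservation condition ⟦ω⟧ · F̃_k = ⟦ψ_k⟧, i.e. Σ_{α=1}^{d+1} (ω_α(p₊,u₊) − ω_α(p₋,u₋)) F̃_k^{(α)} = ψ_k(p₊,u₊) − ψ_k(p₋,u₋), where ψ_k(p,u) = −(1/4) p^{3/4} u_k is the flux potential. -/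
open Real Finset

/-- Entropy variables (main field) of the ultra-relativistic Euler equations:
`ω_i = -(1/4) u_i p^{-1/4}` for `i = 1,…,d` and `ω_{d+1} = (1/4) p^{-1/4} √(1+|u|²)`. -/
noncomputable def entropyVars (d : ℕ) (p : ℝ) (u : Fin d → ℝ) : Fin (d + 1) → ℝ :=
  Fin.snoc (fun i => -(1 / 4) * u i * p ^ (-(1 / 4) : ℝ))
    ((1 / 4) * p ^ (-(1 / 4) : ℝ) * Real.sqrt (1 + ∑ j, u j ^ 2))

/-- Entropy-conservative numerical two-point flux `F̃_k` of Theorem 3.1. -/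
noncomputable def numFlux (d : ℕ) (k : Fin d) (pm : ℝ) (um : Fin d → ℝ)
    (pp : ℝ) (up : Fin d → ℝ) : Fin (d + 1) → ℝ :=
  Fin.snoc
    (fun i => 2 * (pm * Real.sqrt pp + pp * Real.sqrt pm) *
        ((up i * pp ^ (-(1 / 4) : ℝ) + um i * pm ^ (-(1 / 4) : ℝ)) / 2) *
        ((up k * pp ^ (-(1 / 4) : ℝ) + um k * pm ^ (-(1 / 4) : ℝ)) / 2) +
      ((pp + pm) / 2) * (if i = k then 1 else 0))
    (2 * (pm * Real.sqrt pp + pp * Real.sqrt pm) *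
      ((pp ^ (-(1 / 4) : ℝ) * Real.sqrt (1 + ∑ j, up j ^ 2) +
        pm ^ (-(1 / 4) : ℝ) * Real.sqrt (1 + ∑ j, um j ^ 2)) / 2) *
      ((up k * pp ^ (-(1 / 4) : ℝ) + um k * pm ^ (-(1 / 4) : ℝ)) / 2))

/-- Flux potential `ψ_k(p,u) = -(1/4) p^{3/4} u_k`. -/
noncomputable def fluxPotential (d : ℕ) (k : Fin d) (p : ℝ) (u : Fin d → ℝ) : ℝ :=
  -(1 / 4) * p ^ ((3 : ℝ) / 4) * u k

/-! With `v = p^{-1/4} u` and `v₀ = p^{-1/4} √(1+|u|²)`, the entropy variables are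
`(1/4)(-v, v₀)` and the flux is `2 m ⟨v⟩⟨v_k⟩ + ⟨p⟩ e_k` (and `2 m ⟨v₀⟩⟨v_k⟩`), where
`m = p₋√p₊ + p₊√p₋`. Since `⟦a⟧⟨a⟩ = ⟦a²⟧/2` and `v₀² - |v|² = p^{-1/2}`, the pairing collapses to
`(1/4)(m ⟨v_k⟩ ⟦p^{-1/2}⟧ - ⟦v_k⟧⟨p⟩)`. The mass factor satisfies `m ⟦p^{-1/2}⟧ = -⟦p⟧`, so this is
`-(1/4)(⟦p⟧⟨v_k⟩ + ⟨p⟩⟦v_k⟧) = -(1/4)⟦p v_k⟧ = ⟦ψ_k⟧` by the product rule for jumps. -/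

lemma rpow_neg_quarter_sq {p : ℝ} (hp : 0 < p) : (p ^ (-(1 / 4) : ℝ)) ^ 2 = (√p)⁻¹ := by
  rw [← rpow_natCast, ← rpow_mul hp.le, sqrt_eq_rpow, ← rpow_neg hp.le]
  norm_num

lemma rpow_three_quarters_eq_mul_rpow_neg_quarter {p : ℝ} (hp : 0 < p) :
    p ^ ((3 : ℝ) / 4) = p * p ^ (-(1 / 4) : ℝ) := by
  rw [← rpow_one_add' hp.le (by norm_num)]
  norm_num

lemma mul_sqrt_add_mul_sqrt_mul_sub_inv_sqrt {a b : ℝ} (ha : 0 < a) (hb : 0 < b) :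
    (a * √b + b * √a) * ((√b)⁻¹ - (√a)⁻¹) = a - b := by
  have := (sqrt_pos.2 ha).ne'
  have := (sqrt_pos.2 hb).ne'
  field_simp
  linear_combination b * sq_sqrt ha.le - a * sq_sqrt hb.le

lemma sum_jump_entropy_mul_spatial_flux {ι : Type*} [Fintype ι] [DecidableEq ι] (k : ι)
    (um up : ι → ℝ) (qm qp m c P : ℝ) :
    ∑ i, (-(1 / 4) * up i * qp - -(1 / 4) * um i * qm) *
        (2 * m * ((up i * qp + um i * qm) / 2) * c + P * (if i = k then 1 else 0)) =
      -(1 / 4) * (m * c * (qp ^ 2 * ∑ i, up i ^ 2 - qm ^ 2 * ∑ i, um i ^ 2) +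
        (up k * qp - um k * qm) * P) := by
  have hterm : ∀ i, (-(1 / 4) * up i * qp - -(1 / 4) * um i * qm) *
        (2 * m * ((up i * qp + um i * qm) / 2) * c + P * (if i = k then 1 else 0)) =
      -(1 / 4) * m * c * (qp ^ 2 * up i ^ 2 - qm ^ 2 * um i ^ 2) +
        if i = k then -(1 / 4) * (up i * qp - um i * qm) * P else 0 := by
    intro i
    split_ifs <;> ring
  rw [sum_congr rfl fun i _ => hterm i, sum_add_distrib, ← mul_sum, sum_sub_distrib,
    ← mul_sum, ← mul_sum, sum_ite_eq' univ k]
  simp only [mem_univ, if_true]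
  ring

theorem numFlux_entropy_conservative_general (d : ℕ) (k : Fin d)
    (pm pp : ℝ) (hpm : 0 < pm) (hpp : 0 < pp) (um up : Fin d → ℝ) :
    ∑ α : Fin (d + 1),
        (entropyVars d pp up α - entropyVars d pm um α) * numFlux d k pm um pp up α =
      fluxPotential d k pp up - fluxPotential d k pm um := by
  rw [Fin.sum_univ_castSucc]
  simp only [entropyVars, numFlux, fluxPotential, Fin.snoc_castSucc, Fin.snoc_last]
  rw [sum_jump_entropy_mul_spatial_flux, rpow_three_quarters_eq_mul_rpow_neg_quarter hpp,
    rpow_three_quarters_eq_mul_rpow_neg_quarter hpm]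
  have hmass := mul_sqrt_add_mul_sqrt_mul_sub_inv_sqrt hpm hpp
  rw [← rpow_neg_quarter_sq hpp, ← rpow_neg_quarter_sq hpm] at hmass
  set qp := pp ^ (-(1 / 4) : ℝ)
  set qm := pm ^ (-(1 / 4) : ℝ)
  set m := pm * √pp + pp * √pm
  set c := (up k * qp + um k * qm) / 2
  have hSp := sq_sqrt (by positivity : (0 : ℝ) ≤ 1 + ∑ j, up j ^ 2)
  have hSm := sq_sqrt (by positivity : (0 : ℝ) ≤ 1 + ∑ j, um j ^ 2)
  linear_combination (1 / 4) * c * hmass + (1 / 4) * m * c * qp ^ 2 * hSp -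
    (1 / 4) * m * c * qm ^ 2 * hSm

/-- Tadmor's entropy-conservation condition `⟦ω⟧ ⋅ F̃_k = ⟦ψ_k⟧` for the
entropy-conservative numerical flux of the ultra-relativistic Euler equations. -/
theorem numFlux_entropy_conservative (d : ℕ) (hd : 1 ≤ d) (k : Fin d)
    (pm pp : ℝ) (hpm : 0 < pm) (hpp : 0 < pp) (um up : Fin d → ℝ) :
    ∑ α : Fin (d + 1),
        (entropyVars d pp up α - entropyVars d pm um α) * numFlux d k pm um pp up α =
      fluxPotential d k pp up - fluxPotential d k pm um :=
  numFlux_entropy_conservative_general d k pm pp hpm hpp um up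
end

section
/- For every p > 0 and u ∈ ℝ, setting a = p(3+4u²) and b = 4pu√(1+u²), the momentum flux satisfies p + 4pu² = (5/3)a − (2/3)√(4a² − 3b²); that is, the flux function c(a,b) = (5/3)a − (2/3)√(4a²−3b²) of the radially symmetric system equals p + 4pu² under the state transformation Θ. -/
open Real

/-- Under the state transformation `a = p(3+4u²)`, `b = 4pu√(1+u²)`, the
momentum flux satisfies `p + 4pu² = (5/3)a − (2/3)√(4a² − 3b²)`, i.e. the flux
function `c(a,b)` of the radially symmetric system equals `p + 4pu²`. -/
theorem momentum_flux_transform (p u a b : ℝ) (hp : 0 < p)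
    (ha : a = p * (3 + 4 * u ^ 2))
    (hb : b = 4 * p * u * Real.sqrt (1 + u ^ 2)) :
    p + 4 * p * u ^ 2 =
      (5 / 3) * a - (2 / 3) * Real.sqrt (4 * a ^ 2 - 3 * b ^ 2) := by
  have h1 : Real.sqrt (1 + u ^ 2) ^ 2 = 1 + u ^ 2 :=
    Real.sq_sqrt (by positivity)
  have key : 4 * a ^ 2 - 3 * b ^ 2 = (2 * p * (3 + 2 * u ^ 2)) ^ 2 := by
    subst ha hb; ring_nf; rw [h1]; ring
  rw [key, Real.sqrt_sq (by positivity)]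
  subst ha; ring
end
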